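/- The type II polynomial P_{n,m}(x) = ((α+1)_{n+m}(α+ν+1)_m/(n+m)!) ₂F₂(-n-m, m+α+ν+1; α+1, α+ν+1; x) satisfies the differential equation x² y''' + x(2α+ν+3-x) y'' + [(α+1)(α+ν+1) + x(n-α-ν-2)] y' + (n+m)(m+α+ν+1) y = 0. -/

import Mathlib

open MeasureTheory Set

/-- Pochhammer symbol `(z)_n = z(z+1)⋯(z+n-1)`. -/
noncomputable def poch (z : ℝ) (n : ℕ) : ℝ := ∏ i ∈ Finset.range n, (z + i)

/-- The generalized hypergeometric series `₂F₂(a₁,a₂;b₁,b₂;x)`. -/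
noncomputable def F2 (a₁ a₂ b₁ b₂ x : ℝ) : ℝ :=
  ∑' k : ℕ, poch a₁ k * poch a₂ k / (poch b₁ k * poch b₂ k) * x ^ k / k.factorial

/-- The type II polynomial `P_{n,m}`. -/
noncomputable def PII (n m : ℕ) (α ν : ℝ) (x : ℝ) : ℝ :=
  poch (α + 1) (n + m) * poch (α + ν + 1) m / (n + m).factorial *
    F2 (-((n : ℝ) + (m : ℝ))) ((m : ℝ) + α + ν + 1) (α + 1) (α + ν + 1) x

lemma poch_succ (z : ℝ) (k : ℕ) : poch z (k+1) = poch z k * (z + k) :=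
  Finset.prod_range_succ _ _

lemma poch_pos {z : ℝ} (hz : 0 < z) (k : ℕ) : 0 < poch z k :=
  Finset.prod_pos fun i _ => by have : (0:ℝ) ≤ i := Nat.cast_nonneg i; linarith

lemma poch_neg_nat (N k : ℕ) (h : N < k) : poch (-(N:ℝ)) k = 0 :=
  Finset.prod_eq_zero (Finset.mem_range.2 h) (by simp)

/-- Coefficients of the polynomial `P_{n,m}`. -/
noncomputable def Cc (n m : ℕ) (α ν : ℝ) (k : ℕ) : ℝ :=
  poch (α + 1) (n + m) * poch (α + ν + 1) m / (n + m).factorial *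
    (poch (-((n:ℝ) + (m:ℝ))) k * poch ((m:ℝ) + α + ν + 1) k /
      (poch (α + 1) k * poch (α + ν + 1) k * k.factorial))

/-- Shift of a coefficient sequence (multiplication by `x`). -/
noncomputable def sh (C : ℕ → ℝ) : ℕ → ℝ
  | 0 => 0
  | (k+1) => C k

lemma sh_succ (C : ℕ → ℝ) (k : ℕ) : sh C (k+1) = C k := rfl

/-- Derivative action on coefficient sequences. -/
noncomputable def Dc (C : ℕ → ℝ) (k : ℕ) : ℝ := ((k:ℝ)+1) * C (k+1)

lemma Cc_vanish (n m : ℕ) (α ν : ℝ) {k : ℕ} (h : n + m < k) : Cc n m α ν k = 0 := by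
  have h1 : -((n:ℝ) + (m:ℝ)) = -(((n+m : ℕ)) : ℝ) := by push_cast; ring
  rw [Cc, h1, poch_neg_nat _ _ h]
  simp

lemma PII_eq (n m : ℕ) (α ν : ℝ) (x : ℝ) :
    PII n m α ν x = ∑ k ∈ Finset.range (n+m+4), Cc n m α ν k * x ^ k := by
  have hz : ∀ k ∉ Finset.range (n+m+4),
      poch (-((n:ℝ)+(m:ℝ))) k * poch ((m:ℝ)+α+ν+1) k /
        (poch (α+1) k * poch (α+ν+1) k) * x ^ k / (k.factorial : ℝ) = 0 := by
    intro k hk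
    have h1 : -((n:ℝ) + (m:ℝ)) = -(((n+m : ℕ)) : ℝ) := by push_cast; ring
    rw [h1, poch_neg_nat _ _ (by simp only [Finset.mem_range] at hk; omega)]
    simp
  rw [PII, F2, tsum_eq_sum hz, Finset.mul_sum]
  exact Finset.sum_congr rfl fun k _ => by rw [Cc]; ring

lemma Cc_rec (n m : ℕ) (α ν : ℝ) (hα : -1 < α) (hαν : -1 < α + ν) (k : ℕ) :
    ((k:ℝ)+1) * Cc n m α ν (k+1) * (((k:ℝ)+α+1) * ((k:ℝ)+α+ν+1)) =
      Cc n m α ν k * ((((k:ℝ)) - ((n:ℝ)+(m:ℝ))) * ((k:ℝ)+(m:ℝ)+α+ν+1)) := by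
  have h1 : poch (α+1) k ≠ 0 := ne_of_gt (poch_pos (by linarith) k)
  have h2 : poch (α+ν+1) k ≠ 0 := ne_of_gt (poch_pos (by linarith) k)
  have h3 : (k.factorial : ℝ) ≠ 0 := Nat.cast_ne_zero.2 k.factorial_ne_zero
  have h4 : α + 1 + (k:ℝ) ≠ 0 := by have : (0:ℝ) ≤ k := Nat.cast_nonneg k; linarith
  have h5 : α + ν + 1 + (k:ℝ) ≠ 0 := by have : (0:ℝ) ≤ k := Nat.cast_nonneg k; linarith
  have h6 : (k:ℝ) + 1 ≠ 0 := by have : (0:ℝ) ≤ k := Nat.cast_nonneg k; linarith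
  have h7 : ((n+m).factorial : ℝ) ≠ 0 := Nat.cast_ne_zero.2 (n+m).factorial_ne_zero
  rw [Cc, Cc, poch_succ, poch_succ, poch_succ, poch_succ, Nat.factorial_succ]
  push_cast
  field_simp
  ring

lemma T_zero (n m : ℕ) (α ν : ℝ) (hα : -1 < α) (hαν : -1 < α + ν) (k : ℕ) :
    sh (sh (Dc (Dc (Dc (Cc n m α ν))))) k
      + ((2*α+ν+3) * sh (Dc (Dc (Cc n m α ν))) k - sh (sh (Dc (Dc (Cc n m α ν)))) k)
      + ((α+1)*(α+ν+1) * Dc (Cc n m α ν) k + ((n:ℝ)-α-ν-2) * sh (Dc (Cc n m α ν)) k)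
      + ((n:ℝ)+(m:ℝ)) * ((m:ℝ)+α+ν+1) * Cc n m α ν k = 0 := by
  match k with
  | 0 =>
      have h := Cc_rec n m α ν hα hαν 0
      simp only [sh, Dc] at h ⊢
      push_cast at h ⊢
      linear_combination h
  | 1 =>
      have h := Cc_rec n m α ν hα hαν 1
      simp only [sh, Dc] at h ⊢
      push_cast at h ⊢
      linear_combination h
  | (k+2) =>
      have h := Cc_rec n m α ν hα hαν (k+2)
      simp only [sh, Dc] at h ⊢
      push_cast at h ⊢
      linear_combination h

lemma sum_deriv (M : ℕ) (C : ℕ → ℝ) (hC : C (M+1) = 0) :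
    deriv (fun x : ℝ => ∑ k ∈ Finset.range (M+1), C k * x ^ k)
      = fun x => ∑ k ∈ Finset.range (M+1), Dc C k * x ^ k := by
  funext x
  have h : HasDerivAt (fun x : ℝ => ∑ k ∈ Finset.range (M+1), C k * x ^ k)
      (∑ k ∈ Finset.range (M+1), C k * ((k:ℝ) * x ^ (k-1))) x :=
    HasDerivAt.fun_sum fun k _ => HasDerivAt.const_mul (C k) (hasDerivAt_pow k x)
  rw [h.deriv, Finset.sum_range_succ' (fun k => C k * ((k:ℝ) * x ^ (k-1))) M,
      Finset.sum_range_succ (fun k => Dc C k * x ^ k) M]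
  simp only [Dc, hC, Nat.add_sub_cancel, Nat.cast_zero, zero_mul, mul_zero, add_zero]
  exact Finset.sum_congr rfl fun k _ => by push_cast; ring

lemma sum_shift (M : ℕ) (C : ℕ → ℝ) (hC : C M = 0) (x : ℝ) :
    x * ∑ k ∈ Finset.range (M+1), C k * x ^ k
      = ∑ k ∈ Finset.range (M+1), sh C k * x ^ k := by
  rw [Finset.sum_range_succ' (fun k => sh C k * x ^ k) M,
      Finset.mul_sum, Finset.sum_range_succ (fun k => x * (C k * x ^ k)) M]
  simp only [sh, hC, zero_mul, mul_zero, add_zero]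
  exact Finset.sum_congr rfl fun k _ => by ring

/-- `P_{n,m}` satisfies the third-order differential equation
`x²y''' + x(2α+ν+3-x)y'' + [(α+1)(α+ν+1)+x(n-α-ν-2)]y' + (n+m)(m+α+ν+1)y = 0`. -/
theorem PII_ODE (n m : ℕ) (α ν : ℝ) (hα : -1 < α) (hαν : -1 < α + ν) (x : ℝ) :
    x ^ 2 * iteratedDeriv 3 (PII n m α ν) x +
      x * (2 * α + ν + 3 - x) * iteratedDeriv 2 (PII n m α ν) x +
      ((α + 1) * (α + ν + 1) + x * ((n : ℝ) - α - ν - 2)) * deriv (PII n m α ν) x +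
      ((n : ℝ) + (m : ℝ)) * ((m : ℝ) + α + ν + 1) * PII n m α ν x = 0 := by
  set C : ℕ → ℝ := Cc n m α ν with hCdef
  have hvan : ∀ k, n + m < k → C k = 0 := fun k hk => Cc_vanish n m α ν hk
  have hPf : PII n m α ν = fun y => ∑ k ∈ Finset.range (n+m+4), C k * y ^ k :=
    funext fun y => PII_eq n m α ν y
  have hd1 : deriv (PII n m α ν)
      = fun y => ∑ k ∈ Finset.range (n+m+4), Dc C k * y ^ k := by
    rw [hPf]; exact sum_deriv (n+m+3) C (hvan (n+m+3+1) (by omega))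
  have hd2 : deriv (deriv (PII n m α ν))
      = fun y => ∑ k ∈ Finset.range (n+m+4), Dc (Dc C) k * y ^ k := by
    rw [hd1]
    exact sum_deriv (n+m+3) (Dc C) (by simp [Dc, hvan (n+m+3+1+1) (by omega)])
  have hd3 : deriv (deriv (deriv (PII n m α ν)))
      = fun y => ∑ k ∈ Finset.range (n+m+4), Dc (Dc (Dc C)) k * y ^ k := by
    rw [hd2]
    exact sum_deriv (n+m+3) (Dc (Dc C))
      (by simp [Dc, hvan (n+m+3+1+1+1) (by omega)])
  have i3 : iteratedDeriv 3 (PII n m α ν) = deriv (deriv (deriv (PII n m α ν))) := by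
    rw [show (3:ℕ) = 2+1 from rfl, iteratedDeriv_succ,
        show (2:ℕ) = 1+1 from rfl, iteratedDeriv_succ, iteratedDeriv_one]
  have i2 : iteratedDeriv 2 (PII n m α ν) = deriv (deriv (PII n m α ν)) := by
    rw [show (2:ℕ) = 1+1 from rfl, iteratedDeriv_succ, iteratedDeriv_one]
  have hPx : PII n m α ν x = ∑ k ∈ Finset.range (n+m+4), C k * x ^ k := by rw [hPf]
  have hd1x : deriv (PII n m α ν) x
      = ∑ k ∈ Finset.range (n+m+4), Dc C k * x ^ k := by rw [hd1]
  have hd2x : iteratedDeriv 2 (PII n m α ν) x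
      = ∑ k ∈ Finset.range (n+m+4), Dc (Dc C) k * x ^ k := by rw [i2, hd2]
  have hd3x : iteratedDeriv 3 (PII n m α ν) x
      = ∑ k ∈ Finset.range (n+m+4), Dc (Dc (Dc C)) k * x ^ k := by rw [i3, hd3]
  rw [hPx, hd1x, hd2x, hd3x]
  have E1 : x * (∑ k ∈ Finset.range (n+m+4), Dc C k * x ^ k)
      = ∑ k ∈ Finset.range (n+m+4), sh (Dc C) k * x ^ k :=
    sum_shift (n+m+3) (Dc C) (by simp [Dc, hvan (n+m+3+1) (by omega)]) x
  have E2 : x * (∑ k ∈ Finset.range (n+m+4), Dc (Dc C) k * x ^ k)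
      = ∑ k ∈ Finset.range (n+m+4), sh (Dc (Dc C)) k * x ^ k :=
    sum_shift (n+m+3) (Dc (Dc C)) (by simp [Dc, hvan (n+m+3+1+1) (by omega)]) x
  have E2b : x * (∑ k ∈ Finset.range (n+m+4), sh (Dc (Dc C)) k * x ^ k)
      = ∑ k ∈ Finset.range (n+m+4), sh (sh (Dc (Dc C))) k * x ^ k :=
    sum_shift (n+m+3) (sh (Dc (Dc C)))
      (by
        rw [show n+m+3 = n+m+2+1 by omega, sh_succ]
        simp [Dc, hvan (n+m+2+1+1) (by omega)]) x
  have E3 : x * (∑ k ∈ Finset.range (n+m+4), Dc (Dc (Dc C)) k * x ^ k)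
      = ∑ k ∈ Finset.range (n+m+4), sh (Dc (Dc (Dc C))) k * x ^ k :=
    sum_shift (n+m+3) (Dc (Dc (Dc C)))
      (by simp [Dc, hvan (n+m+3+1+1+1) (by omega)]) x
  have E3b : x * (∑ k ∈ Finset.range (n+m+4), sh (Dc (Dc (Dc C))) k * x ^ k)
      = ∑ k ∈ Finset.range (n+m+4), sh (sh (Dc (Dc (Dc C)))) k * x ^ k :=
    sum_shift (n+m+3) (sh (Dc (Dc (Dc C))))
      (by
        rw [show n+m+3 = n+m+2+1 by omega, sh_succ]
        simp [Dc, hvan (n+m+2+1+1+1) (by omega)]) x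
  have K : (∑ k ∈ Finset.range (n+m+4), sh (sh (Dc (Dc (Dc C)))) k * x ^ k)
      + ((2*α+ν+3) * (∑ k ∈ Finset.range (n+m+4), sh (Dc (Dc C)) k * x ^ k)
          - ∑ k ∈ Finset.range (n+m+4), sh (sh (Dc (Dc C))) k * x ^ k)
      + ((α+1)*(α+ν+1) * (∑ k ∈ Finset.range (n+m+4), Dc C k * x ^ k)
          + ((n:ℝ)-α-ν-2) * ∑ k ∈ Finset.range (n+m+4), sh (Dc C) k * x ^ k)
      + ((n:ℝ)+(m:ℝ)) * ((m:ℝ)+α+ν+1)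
          * ∑ k ∈ Finset.range (n+m+4), C k * x ^ k = 0 := by
    simp only [Finset.mul_sum, ← Finset.sum_add_distrib, ← Finset.sum_sub_distrib]
    refine Finset.sum_eq_zero fun k _ => ?_
    have h := T_zero n m α ν hα hαν k
    linear_combination x ^ k * h
  linear_combination x*E3 + E3b + (2*α+ν+3)*E2 - x*E2 - E2b + ((n:ℝ)-α-ν-2)*E1 + K
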